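/- arXiv:1408.2299 — 2 statements merged into one kernel-verified Lean document; each statement's English description precedes it below -/
import Mathlib

section
/- Let B = (b_{i1...im}) be a symmetric double B-tensor of even order m and dimension n ≥ 2. Then B is positive definite. -/
open Finset

/-- The set of index tuples `(i, i₂, …, i_m)` in row `i` of an order-`m`, dimension-`n`
tensor, i.e. all tuples whose first index is `i`. -/
def rowSet (m n : ℕ) (i : Fin n) : Finset (Fin m → Fin n) :=
  Finset.univ.filter fun α => ∀ t : Fin m, (t : ℕ) = 0 → α t = i

/-- The set of off-diagonal index tuples in row `i`: tuples whose first index is `i`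
and whose indices are not all equal to `i` (i.e. `δ_{i i₂ … i_m} = 0`). -/
def offRowSet (m n : ℕ) (i : Fin n) : Finset (Fin m → Fin n) :=
  Finset.univ.filter fun α => (∀ t : Fin m, (t : ℕ) = 0 → α t = i) ∧ α ≠ fun _ => i

/-- The diagonal entry `b_{i…i}`. -/
def diagEntry {m n : ℕ} (B : (Fin m → Fin n) → ℝ) (i : Fin n) : ℝ :=
  B fun _ => i

/-- `β_i(B) = max {0, b_{i j₂ ⋯ j_m} : δ_{i j₂ … j_m} = 0}`. -/
def betaMax {m n : ℕ} (B : (Fin m → Fin n) → ℝ) (i : Fin n) : ℝ :=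
  (offRowSet m n i).fold max 0 B

/-- `Δ_i(B) = Σ_{δ_{i i₂…i_m} = 0} (β_i(B) - b_{i i₂ ⋯ i_m})`. -/
def DeltaSum {m n : ℕ} (B : (Fin m → Fin n) → ℝ) (i : Fin n) : ℝ :=
  ∑ α ∈ offRowSet m n i, (betaMax B i - B α)

/-- `r_i(B) = Σ_{δ_{i i₂…i_m} = 0} |b_{i i₂ ⋯ i_m}|`. -/
def rowAbsSum {m n : ℕ} (B : (Fin m → Fin n) → ℝ) (i : Fin n) : ℝ :=
  ∑ α ∈ offRowSet m n i, |B α|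

/-- The index tuple `(j, i, i, …, i)`. -/
def spike (m n : ℕ) (j i : Fin n) : Fin m → Fin n :=
  fun t => if (t : ℕ) = 0 then j else i

/-- `Δ_j^i(B) = Δ_j(B) - (β_j(B) - b_{j i⋯i})`. -/
def DeltaSubSum {m n : ℕ} (B : (Fin m → Fin n) → ℝ) (j i : Fin n) : ℝ :=
  DeltaSum B j - (betaMax B j - B (spike m n j i))

/-- `r_j^i(B) = r_j(B) - |b_{j i⋯i}|`. -/
def rowAbsSubSum {m n : ℕ} (B : (Fin m → Fin n) → ℝ) (j i : Fin n) : ℝ :=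
  rowAbsSum B j - |B (spike m n j i)|

/-- `B` is a B-tensor: each row sum is positive and `(1/n^{m-1})` times the row sum
strictly dominates every off-diagonal entry of that row. -/
def IsBTensor {m n : ℕ} (B : (Fin m → Fin n) → ℝ) : Prop :=
  ∀ i : Fin n,
    0 < ∑ α ∈ rowSet m n i, B α ∧
    ∀ α ∈ offRowSet m n i,
      B α < (1 / (n : ℝ) ^ (m - 1)) * ∑ α' ∈ rowSet m n i, B α'

/-- `B` is a double B-tensor. -/
def IsDoubleBTensor {m n : ℕ} (B : (Fin m → Fin n) → ℝ) : Prop :=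
  (∀ i, betaMax B i < diagEntry B i) ∧
  (∀ i, DeltaSum B i ≤ diagEntry B i - betaMax B i) ∧
  (∀ i j, i ≠ j →
    DeltaSum B i * DeltaSum B j <
      (diagEntry B i - betaMax B i) * (diagEntry B j - betaMax B j))

/-- `B` is a quasi-double B-tensor. -/
def IsQuasiDoubleBTensor {m n : ℕ} (B : (Fin m → Fin n) → ℝ) : Prop :=
  (∀ i, betaMax B i < diagEntry B i) ∧
  ∀ i j, i ≠ j →
    (betaMax B j - B (spike m n j i)) * DeltaSum B i <
      (diagEntry B i - betaMax B i) *
        (diagEntry B j - betaMax B j - DeltaSubSum B j i)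

/-- `B` is a Z-tensor: all off-diagonal entries are non-positive. -/
def IsZTensor {m n : ℕ} (B : (Fin m → Fin n) → ℝ) : Prop :=
  ∀ α : Fin m → Fin n, (∃ s t, α s ≠ α t) → B α ≤ 0

/-- `B` is a symmetric tensor: invariant under permutations of the indices. -/
def IsSymmetricTensor {m n : ℕ} (B : (Fin m → Fin n) → ℝ) : Prop :=
  ∀ (σ : Equiv.Perm (Fin m)) (α : Fin m → Fin n), B (α ∘ σ) = B α

/-- `B` is doubly strictly diagonally dominant (for order `m > 2`). -/
def IsDSDD {m n : ℕ} (B : (Fin m → Fin n) → ℝ) : Prop :=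
  (∀ i, rowAbsSum B i ≤ |diagEntry B i|) ∧
  (∀ i j, i ≠ j → rowAbsSum B i * rowAbsSum B j < |diagEntry B i| * |diagEntry B j|)

/-- `B` is quasi-doubly strictly diagonally dominant. -/
def IsQDSDD {m n : ℕ} (B : (Fin m → Fin n) → ℝ) : Prop :=
  ∀ i j, i ≠ j →
    rowAbsSum B i * |B (spike m n j i)| <
      |diagEntry B i| * (|diagEntry B j| - rowAbsSubSum B j i)

/-- `B x^m = Σ b_{i₁⋯i_m} x_{i₁} ⋯ x_{i_m}`. -/
def tensorApply {m n : ℕ} (B : (Fin m → Fin n) → ℝ) (x : Fin n → ℝ) : ℝ :=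
  ∑ α : Fin m → Fin n, B α * ∏ t, x (α t)

/-- `B` is positive definite: `B x^m > 0` for every nonzero `x ∈ ℝ^n`. -/
def IsPosDefTensor {m n : ℕ} (B : (Fin m → Fin n) → ℝ) : Prop :=
  ∀ x : Fin n → ℝ, x ≠ 0 → 0 < tensorApply B x

/-- `(B x^{m-1})_i = Σ_{i₂,…,i_m} b_{i i₂ ⋯ i_m} x_{i₂} ⋯ x_{i_m}`. -/
def rowApply {m n : ℕ} (B : (Fin m → Fin n) → ℝ) (x : Fin n → ℝ) (i : Fin n) : ℝ :=
  ∑ α ∈ rowSet m n i, B α * ∏ t ∈ Finset.univ.filter (fun t : Fin m => (t : ℕ) ≠ 0), x (α t)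

/-- `B` is a P-tensor: for every nonzero `x`, `max_i x_i (B x^{m-1})_i > 0`. -/
def IsPTensor {m n : ℕ} (B : (Fin m → Fin n) → ℝ) : Prop :=
  ∀ x : Fin n → ℝ, x ≠ 0 → ∃ i, 0 < x i * rowApply B x i

/-- `lam` is an H-eigenvalue of `B`. -/
def IsHEigenvalue {m n : ℕ} (B : (Fin m → Fin n) → ℝ) (lam : ℝ) : Prop :=
  ∃ x : Fin n → ℝ, x ≠ 0 ∧ ∀ i, rowApply B x i = lam * x i ^ (m - 1)

/-- The partially all one tensor `ε^J`: entry `1` if all indices lie in `J`, else `0`. -/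
def epsTensor (m n : ℕ) (J : Finset (Fin n)) : (Fin m → Fin n) → ℝ :=
  fun α => if ∀ t, α t ∈ J then 1 else 0

namespace Stmt14Aux

variable {m n : ℕ}

lemma betaMax_nonneg (B : (Fin m → Fin n) → ℝ) (i : Fin n) : 0 ≤ betaMax B i :=
  (Finset.le_fold_max _).2 (Or.inl le_rfl)

lemma le_betaMax {B : (Fin m → Fin n) → ℝ} {i : Fin n} {α : Fin m → Fin n}
    (h : α ∈ offRowSet m n i) : B α ≤ betaMax B i :=
  (Finset.le_fold_max _).2 (Or.inr ⟨α, h, le_rfl⟩)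

lemma mem_offRowSet (hm : 0 < m) {i : Fin n} {α : Fin m → Fin n} :
    α ∈ offRowSet m n i ↔ α ⟨0, hm⟩ = i ∧ α ≠ fun _ => i := by
  simp only [offRowSet, Finset.mem_filter, Finset.mem_univ, true_and]
  constructor
  · rintro ⟨h1, h2⟩; exact ⟨h1 ⟨0, hm⟩ rfl, h2⟩
  · rintro ⟨h1, h2⟩
    refine ⟨fun t ht => ?_, h2⟩
    have : t = ⟨0, hm⟩ := Fin.ext ht
    rwa [this]

lemma le_betaMax_of_nonconst (hm : 0 < m) {B : (Fin m → Fin n) → ℝ}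
    (hsym : IsSymmetricTensor B) {α : Fin m → Fin n}
    (hnc : ∃ u v, α u ≠ α v) (s : Fin m) : B α ≤ betaMax B (α s) := by
  set σ := Equiv.swap (⟨0, hm⟩ : Fin m) s with hσ
  have hmem : (α ∘ σ) ∈ offRowSet m n (α s) := by
    rw [mem_offRowSet hm]
    constructor
    · show α (σ ⟨0, hm⟩) = α s
      simp [hσ, Equiv.swap_apply_left]
    · intro hc
      obtain ⟨u, v, huv⟩ := hnc
      have h1 : α u = α s := by
        have := congrFun hc (σ.symm u)
        simpa using this
      have h2 : α v = α s := by
        have := congrFun hc (σ.symm v)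
        simpa using this
      exact huv (h1.trans h2.symm)
  calc B α = B (α ∘ σ) := (hsym σ α).symm
    _ ≤ betaMax B (α s) := le_betaMax hmem

lemma inf'_add_const {ι : Type*} {s : Finset ι} (hs : s.Nonempty) (f : ι → ℝ) (c : ℝ) :
    s.inf' hs (fun t => f t + c) = s.inf' hs f + c := by
  apply le_antisymm
  · obtain ⟨t, ht, hf⟩ := s.exists_mem_eq_inf' hs f
    calc s.inf' hs (fun t => f t + c) ≤ f t + c := Finset.inf'_le _ ht
      _ = s.inf' hs f + c := by rw [hf]
  · exact Finset.le_inf' _ _ fun t ht => add_le_add_left (Finset.inf'_le _ ht) c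

lemma inf'_comp_perm {ι : Type*} [Fintype ι] (hs : (Finset.univ : Finset ι).Nonempty)
    (f : ι → ℝ) (σ : Equiv.Perm ι) :
    Finset.univ.inf' hs (fun t => f (σ t)) = Finset.univ.inf' hs f := by
  apply le_antisymm
  · obtain ⟨t, ht, hf⟩ := Finset.exists_mem_eq_inf' hs f
    calc Finset.univ.inf' hs (fun t => f (σ t)) ≤ f (σ (σ.symm t)) :=
          Finset.inf'_le _ (Finset.mem_univ _)
      _ = Finset.univ.inf' hs f := by rw [Equiv.apply_symm_apply, hf]
  · obtain ⟨t, ht, hf⟩ := Finset.exists_mem_eq_inf' hs (fun t => f (σ t))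
    calc Finset.univ.inf' hs f ≤ f (σ t) := Finset.inf'_le _ (Finset.mem_univ _)
      _ = Finset.univ.inf' hs (fun t => f (σ t)) := hf.symm

/-- AM-GM: product of m nonneg reals is at most the average of their m-th powers. -/
lemma prod_le_avg_pow (hm : 0 < m) (y : Fin m → ℝ) (hy : ∀ t, 0 ≤ y t) :
    ∏ t, y t ≤ (1 / (m : ℝ)) * ∑ t, y t ^ m := by
  have hm' : (m : ℝ) ≠ 0 := Nat.cast_ne_zero.2 hm.ne'
  have h := Real.geom_mean_le_arith_mean_weighted Finset.univ (fun _ => 1 / (m : ℝ))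
      (fun t => y t ^ m) (fun _ _ => one_div_nonneg.2 (Nat.cast_nonneg m))
      (by rw [Finset.sum_const, Finset.card_univ, Fintype.card_fin, nsmul_eq_mul]; field_simp)
      (fun t _ => pow_nonneg (hy t) m)
  have e1 : ∀ t : Fin m, ((y t ^ m : ℝ)) ^ ((1 : ℝ) / m) = y t := by
    intro t
    rw [← Real.rpow_natCast (y t) m, ← Real.rpow_mul (hy t), mul_one_div,
      div_self hm', Real.rpow_one]
  calc ∏ t, y t = ∏ t, ((y t ^ m : ℝ)) ^ ((1 : ℝ) / m) :=
        Finset.prod_congr rfl fun t _ => (e1 t).symm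
    _ ≤ ∑ t, (1 / (m : ℝ)) * y t ^ m := h
    _ = (1 / (m : ℝ)) * ∑ t, y t ^ m := by rw [Finset.mul_sum]

/-- layer-cake positivity for the "min" tensor. -/
lemma min_tensor_nonneg (hm : 0 < m) (hme : Even m) (x : Fin n → ℝ) :
    ∀ (k : ℕ) (β : Fin n → ℝ), (∀ i, 0 ≤ β i) →
      ((Finset.univ.filter fun i => β i ≠ 0).card ≤ k) →
      0 ≤ ∑ α : Fin m → Fin n,
        (Finset.univ.inf' ⟨⟨0, hm⟩, Finset.mem_univ _⟩ fun t => β (α t)) * ∏ t, x (α t) := by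
  have hne : (Finset.univ : Finset (Fin m)).Nonempty := ⟨⟨0, hm⟩, Finset.mem_univ _⟩
  intro k
  induction k with
  | zero =>
    intro β hβ hcard
    have hz : ∀ i, β i = 0 := by
      intro i
      by_contra h
      have hmem : i ∈ Finset.univ.filter fun i => β i ≠ 0 := by simp [h]
      have := Finset.card_pos.2 ⟨i, hmem⟩
      omega
    have hinf : ∀ α : Fin m → Fin n, (Finset.univ.inf' hne fun t => β (α t)) = 0 := by
      intro α
      simp [hz]
    exact le_of_eq (Finset.sum_eq_zero fun α _ => by rw [hinf α, zero_mul]).symm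
  | succ k ih =>
    intro β hβ hcard
    by_cases hJ : (Finset.univ.filter fun i => β i ≠ 0) = ∅
    · exact ih β hβ (by rw [hJ]; simp)
    · set J := Finset.univ.filter fun i => β i ≠ 0 with hJdef
      have hJne : J.Nonempty := Finset.nonempty_of_ne_empty hJ
      set c := J.inf' hJne β with hcdef
      obtain ⟨ic, hic, hceq⟩ := J.exists_mem_eq_inf' hJne β
      have hic' : β ic ≠ 0 := (Finset.mem_filter.1 hic).2
      have hc_pos : 0 < c := by
        rw [hcdef, hceq]
        exact lt_of_le_of_ne (hβ ic) (Ne.symm hic')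
      have hc_le : ∀ i ∈ J, c ≤ β i := fun i hi => Finset.inf'_le _ hi
      set β' : Fin n → ℝ := fun i => if β i = 0 then 0 else β i - c with hβ'def
      have hβ' : ∀ i, 0 ≤ β' i := by
        intro i
        by_cases h : β i = 0
        · simp [hβ'def, h]
        · simp only [hβ'def, h, if_false]
          have : i ∈ J := by simp [hJdef, h]
          linarith [hc_le i this]
      have hsupp : (Finset.univ.filter fun i => β' i ≠ 0) ⊆ J.erase ic := by
        intro i hi
        simp only [Finset.mem_filter, Finset.mem_univ, true_and] at hi
        have hβi : β i ≠ 0 := by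
          intro h
          exact hi (by simp [hβ'def, h])
        refine Finset.mem_erase.2 ⟨?_, by simp [hJdef, hβi]⟩
        intro h
        apply hi
        rw [h]
        simp only [hβ'def, hic', if_false]
        rw [hcdef, hceq]
        ring
      have hcard' : (Finset.univ.filter fun i => β' i ≠ 0).card ≤ k := by
        have h1 := Finset.card_le_card hsupp
        have h2 : (J.erase ic).card < J.card := Finset.card_erase_lt_of_mem hic
        omega
      set y : Fin n → ℝ := fun j => (if β j = 0 then (0 : ℝ) else 1) * x j with hydef
      have key : ∀ α : Fin m → Fin n,
          (Finset.univ.inf' hne fun t => β (α t)) =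
          (Finset.univ.inf' hne fun t => β' (α t)) +
            c * ∏ t, (if β (α t) = 0 then (0 : ℝ) else 1) := by
        intro α
        by_cases hall : ∀ t, β (α t) ≠ 0
        · have hprod : ∏ t, (if β (α t) = 0 then (0 : ℝ) else 1) = 1 :=
            Finset.prod_eq_one fun t _ => by simp [hall t]
          rw [hprod, mul_one]
          have heq : (fun t => β (α t)) = fun t => β' (α t) + c := by
            funext t
            simp only [hβ'def, hall t, if_false]
            ring
          rw [heq, inf'_add_const]
        · push_neg at hall
          obtain ⟨s, hs⟩ := hall
          have h1 : (Finset.univ.inf' hne fun t => β (α t)) = 0 := by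
            apply le_antisymm
            · calc (Finset.univ.inf' hne fun t => β (α t)) ≤ β (α s) :=
                    Finset.inf'_le _ (Finset.mem_univ s)
                _ = 0 := hs
            · exact Finset.le_inf' _ _ fun t _ => hβ _
          have h2 : (Finset.univ.inf' hne fun t => β' (α t)) = 0 := by
            apply le_antisymm
            · calc (Finset.univ.inf' hne fun t => β' (α t)) ≤ β' (α s) :=
                    Finset.inf'_le _ (Finset.mem_univ s)
                _ = 0 := by simp [hβ'def, hs]
            · exact Finset.le_inf' _ _ fun t _ => hβ' _
          have h3 : ∏ t, (if β (α t) = 0 then (0 : ℝ) else 1) = 0 :=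
            Finset.prod_eq_zero (Finset.mem_univ s) (by simp [hs])
          rw [h1, h2, h3, mul_zero, add_zero]
      have expand : ∑ α : Fin m → Fin n,
            (Finset.univ.inf' hne fun t => β (α t)) * ∏ t, x (α t)
          = (∑ α : Fin m → Fin n,
              (Finset.univ.inf' hne fun t => β' (α t)) * ∏ t, x (α t))
            + c * ∑ α : Fin m → Fin n, ∏ t, y (α t) := by
        rw [Finset.mul_sum, ← Finset.sum_add_distrib]
        refine Finset.sum_congr rfl fun α _ => ?_
        rw [key α, add_mul, mul_assoc, ← Finset.prod_mul_distrib]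
      rw [expand]
      have hpow : ∑ α : Fin m → Fin n, ∏ t, y (α t) = (∑ j, y j) ^ m :=
        (Fintype.sum_pow y m).symm
      have h5 : 0 ≤ (∑ j, y j) ^ m := hme.pow_nonneg _
      have h6 := ih β' hβ' hcard'
      rw [hpow]
      exact add_nonneg h6 (mul_nonneg hc_pos.le h5)

end Stmt14Aux

open Stmt14Aux

/-- an even order symmetric double B-tensor is positive definite. -/
theorem stmt14 (m n : ℕ) (hm : 0 < m) (hme : Even m) (hn : 2 ≤ n)
    (B : (Fin m → Fin n) → ℝ) (hsym : IsSymmetricTensor B)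
    (hB : IsDoubleBTensor B) : IsPosDefTensor B := by
  obtain ⟨h1, h2, h3⟩ := hB
  intro x hx
  have hne : (Finset.univ : Finset (Fin m)).Nonempty := ⟨⟨0, hm⟩, Finset.mem_univ _⟩
  have hmR : (m : ℝ) ≠ 0 := Nat.cast_ne_zero.2 hm.ne'
  set p : (Fin m → Fin n) → ℝ :=
    fun α => Finset.univ.inf' hne fun t => betaMax B (α t) with hpdef
  set Mt : (Fin m → Fin n) → ℝ := fun α => B α - p α with hMtdef
  set OffD : Finset (Fin m → Fin n) :=
    Finset.univ.filter fun α => ∃ u v, α u ≠ α v with hOffDdef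
  set ρ : Fin n → ℝ := fun i => ∑ α ∈ offRowSet m n i, (p α - B α) with hρdef
  -- basic facts
  have hp_perm : ∀ (σ : Equiv.Perm (Fin m)) (α : Fin m → Fin n), p (α ∘ σ) = p α := by
    intro σ α
    exact inf'_comp_perm hne (fun t => betaMax B (α t)) σ
  have hM_perm : ∀ (σ : Equiv.Perm (Fin m)) (α : Fin m → Fin n), Mt (α ∘ σ) = Mt α := by
    intro σ α
    simp only [hMtdef]
    rw [hsym σ α, hp_perm σ α]
  have hM_nonpos : ∀ α : Fin m → Fin n, (∃ u v, α u ≠ α v) → Mt α ≤ 0 := by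
    intro α hnc
    have hle : B α ≤ p α :=
      Finset.le_inf' hne _ fun t _ => le_betaMax_of_nonconst hm hsym hnc t
    simp only [hMtdef]
    linarith
  have hp_le_row : ∀ (i : Fin n) (α : Fin m → Fin n),
      α ∈ offRowSet m n i → p α ≤ betaMax B i := by
    intro i α hα
    have h0 : α ⟨0, hm⟩ = i := ((mem_offRowSet hm).1 hα).1
    calc p α ≤ betaMax B (α ⟨0, hm⟩) := Finset.inf'_le _ (Finset.mem_univ _)
      _ = betaMax B i := by rw [h0]
  have hfiber : ∀ i : Fin n,
      OffD.filter (fun α => α ⟨0, hm⟩ = i) = offRowSet m n i := by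
    intro i
    ext α
    rw [Finset.mem_filter, hOffDdef, Finset.mem_filter, mem_offRowSet hm]
    constructor
    · rintro ⟨⟨-, u, v, huv⟩, h0⟩
      refine ⟨h0, fun hc => ?_⟩
      exact huv ((congrFun hc u).trans (congrFun hc v).symm)
    · rintro ⟨h0, hne'⟩
      refine ⟨⟨Finset.mem_univ _, ?_⟩, h0⟩
      by_contra hcon
      push_neg at hcon
      exact hne' (funext fun t => (hcon t ⟨0, hm⟩).trans h0)
  have hρΔ : ∀ i, ρ i ≤ DeltaSum B i := by
    intro i
    apply Finset.sum_le_sum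
    intro α hα
    have := hp_le_row i α hα
    linarith
  have hrowM : ∀ i, ∑ α ∈ offRowSet m n i, Mt α = -ρ i := by
    intro i
    rw [hρdef, ← Finset.sum_neg_distrib]
    exact Finset.sum_congr rfl fun α _ => by simp only [hMtdef]; ring
  -- decomposition
  have hA : tensorApply B x =
      (∑ α : Fin m → Fin n, p α * ∏ t, x (α t)) +
        ∑ α : Fin m → Fin n, Mt α * ∏ t, x (α t) := by
    unfold tensorApply
    rw [← Finset.sum_add_distrib]
    exact Finset.sum_congr rfl fun α _ => by simp only [hMtdef]; ring
  have hP : 0 ≤ ∑ α : Fin m → Fin n, p α * ∏ t, x (α t) :=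
    min_tensor_nonneg hm hme x
      ((Finset.univ.filter fun i => betaMax B i ≠ 0).card)
      (fun i => betaMax B i) (fun i => betaMax_nonneg B i) le_rfl
  have hconst_sum : ∑ α ∈ Finset.univ.filter
        (fun α : Fin m → Fin n => ¬∃ u v, α u ≠ α v),
      Mt α * ∏ t, x (α t) = ∑ i : Fin n, (diagEntry B i - betaMax B i) * x i ^ m := by
    apply Finset.sum_nbij' (i := fun α => α ⟨0, hm⟩) (j := fun i => fun _ => i)
    · intro a _
      exact Finset.mem_univ _
    · intro i _
      simp
    · intro α hα
      simp only [Finset.mem_filter, Finset.mem_univ, true_and] at hα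
      push_neg at hα
      exact funext fun t => (hα ⟨0, hm⟩ t).symm ▸ rfl
    · intro i _
      rfl
    · intro α hα
      simp only [Finset.mem_filter, Finset.mem_univ, true_and] at hα
      push_neg at hα
      have hconst : α = fun _ => α ⟨0, hm⟩ := funext fun t => hα t ⟨0, hm⟩
      have hMval : Mt α = diagEntry B (α ⟨0, hm⟩) - betaMax B (α ⟨0, hm⟩) := by
        conv_lhs => rw [hconst]
        simp only [hMtdef]
        congr 1
        simp [hpdef]
      have hprod : ∏ t, x (α t) = x (α ⟨0, hm⟩) ^ m := by
        conv_lhs => rw [hconst]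
        rw [Finset.prod_const, Finset.card_univ, Fintype.card_fin]
      rw [hMval, hprod]
  have hsplit : ∑ α : Fin m → Fin n, Mt α * ∏ t, x (α t)
      = (∑ i : Fin n, (diagEntry B i - betaMax B i) * x i ^ m)
        + ∑ α ∈ OffD, Mt α * ∏ t, x (α t) := by
    rw [← Finset.sum_filter_add_sum_filter_not Finset.univ
      (fun α : Fin m → Fin n => ∃ u v, α u ≠ α v) (fun α => Mt α * ∏ t, x (α t)),
      hconst_sum, hOffDdef, add_comm]
  have hbound : ∀ α ∈ OffD,
      Mt α * ((1 / (m : ℝ)) * ∑ t, x (α t) ^ m) ≤ Mt α * ∏ t, x (α t) := by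
    intro α hα
    rw [hOffDdef, Finset.mem_filter] at hα
    have hMα : Mt α ≤ 0 := hM_nonpos α hα.2
    have hprodle : ∏ t, x (α t) ≤ (1 / (m : ℝ)) * ∑ t, x (α t) ^ m := by
      calc ∏ t, x (α t) ≤ |∏ t, x (α t)| := le_abs_self _
        _ = ∏ t, |x (α t)| := by rw [Finset.abs_prod]
        _ ≤ (1 / (m : ℝ)) * ∑ t, |x (α t)| ^ m :=
            prod_le_avg_pow hm (fun t => |x (α t)|) (fun t => abs_nonneg _)
        _ = (1 / (m : ℝ)) * ∑ t, x (α t) ^ m := by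
            congr 1
            exact Finset.sum_congr rfl fun t _ => hme.pow_abs _
    exact mul_le_mul_of_nonpos_left hprodle hMα
  have hswap : ∀ t : Fin m, ∑ α ∈ OffD, Mt α * x (α t) ^ m
      = ∑ α ∈ OffD, Mt α * x (α ⟨0, hm⟩) ^ m := by
    intro t
    apply Finset.sum_nbij' (i := fun α => α ∘ Equiv.swap (⟨0, hm⟩ : Fin m) t)
      (j := fun α => α ∘ Equiv.swap (⟨0, hm⟩ : Fin m) t)
    · intro α hα
      rw [hOffDdef, Finset.mem_filter] at hα ⊢
      obtain ⟨-, u, v, huv⟩ := hα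
      refine ⟨Finset.mem_univ _, (Equiv.swap (⟨0, hm⟩ : Fin m) t).symm u,
        (Equiv.swap (⟨0, hm⟩ : Fin m) t).symm v, ?_⟩
      simpa using huv
    · intro α hα
      rw [hOffDdef, Finset.mem_filter] at hα ⊢
      obtain ⟨-, u, v, huv⟩ := hα
      refine ⟨Finset.mem_univ _, (Equiv.swap (⟨0, hm⟩ : Fin m) t).symm u,
        (Equiv.swap (⟨0, hm⟩ : Fin m) t).symm v, ?_⟩
      simpa using huv
    · intro α _
      funext s
      simp [Equiv.swap_apply_self]
    · intro α _
      funext s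
      simp [Equiv.swap_apply_self]
    · intro α _
      rw [hM_perm (Equiv.swap (⟨0, hm⟩ : Fin m) t) α]
      have : (α ∘ Equiv.swap (⟨0, hm⟩ : Fin m) t) ⟨0, hm⟩ = α t := by
        simp [Equiv.swap_apply_left]
      rw [this]
  have hfib : ∑ α ∈ OffD, Mt α * x (α ⟨0, hm⟩) ^ m
      = ∑ i : Fin n, (-ρ i) * x i ^ m := by
    rw [← Finset.sum_fiberwise OffD (fun α => α ⟨0, hm⟩)
      (fun α => Mt α * x (α ⟨0, hm⟩) ^ m)]
    apply Finset.sum_congr rfl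
    intro i _
    calc ∑ α ∈ OffD.filter (fun α => α ⟨0, hm⟩ = i), Mt α * x (α ⟨0, hm⟩) ^ m
        = ∑ α ∈ offRowSet m n i, Mt α * x i ^ m := by
          rw [hfiber i]
          refine Finset.sum_congr rfl fun α hα => ?_
          rw [((mem_offRowSet hm).1 hα).1]
      _ = (∑ α ∈ offRowSet m n i, Mt α) * x i ^ m := (Finset.sum_mul _ _ _).symm
      _ = (-ρ i) * x i ^ m := by rw [hrowM i]
  have hOsum : ∑ α ∈ OffD, Mt α * ((1 / (m : ℝ)) * ∑ t, x (α t) ^ m)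
      = ∑ i : Fin n, (-ρ i) * x i ^ m := by
    calc ∑ α ∈ OffD, Mt α * ((1 / (m : ℝ)) * ∑ t, x (α t) ^ m)
        = ∑ α ∈ OffD, ∑ t : Fin m, (1 / (m : ℝ)) * (Mt α * x (α t) ^ m) := by
          refine Finset.sum_congr rfl fun α _ => ?_
          simp only [Finset.mul_sum]
          exact Finset.sum_congr rfl fun t _ => by ring
      _ = ∑ t : Fin m, ∑ α ∈ OffD, (1 / (m : ℝ)) * (Mt α * x (α t) ^ m) :=
          Finset.sum_comm
      _ = ∑ t : Fin m, (1 / (m : ℝ)) * ∑ α ∈ OffD, Mt α * x (α t) ^ m := by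
          refine Finset.sum_congr rfl fun t _ => ?_
          rw [Finset.mul_sum]
      _ = ∑ t : Fin m, (1 / (m : ℝ)) * ∑ i : Fin n, (-ρ i) * x i ^ m := by
          refine Finset.sum_congr rfl fun t _ => ?_
          rw [hswap t, hfib]
      _ = ∑ i : Fin n, (-ρ i) * x i ^ m := by
          rw [Finset.sum_const, Finset.card_univ, Fintype.card_fin, nsmul_eq_mul]
          field_simp
  have main : ∑ i : Fin n, ((diagEntry B i - betaMax B i) - ρ i) * x i ^ m
      ≤ tensorApply B x := by
    have hsum_split : ∑ i : Fin n, ((diagEntry B i - betaMax B i) - ρ i) * x i ^ m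
        = (∑ i : Fin n, (diagEntry B i - betaMax B i) * x i ^ m)
          + ∑ i : Fin n, (-ρ i) * x i ^ m := by
      rw [← Finset.sum_add_distrib]
      exact Finset.sum_congr rfl fun i _ => by ring
    have hO : ∑ i : Fin n, (-ρ i) * x i ^ m ≤ ∑ α ∈ OffD, Mt α * ∏ t, x (α t) := by
      rw [← hOsum]
      exact Finset.sum_le_sum hbound
    rw [hA, hsplit, hsum_split]
    linarith
  -- endgame
  have hcoef : ∀ i, 0 ≤ (diagEntry B i - betaMax B i) - ρ i := by
    intro i
    have := hρΔ i
    have := h2 i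
    linarith
  have hterm_nonneg : ∀ i : Fin n,
      0 ≤ ((diagEntry B i - betaMax B i) - ρ i) * x i ^ m :=
    fun i => mul_nonneg (hcoef i) (hme.pow_nonneg _)
  obtain ⟨i1, hi1⟩ : ∃ i, x i ≠ 0 := Function.ne_iff.1 hx
  by_cases hc1 : ρ i1 < diagEntry B i1 - betaMax B i1
  · have hterm : 0 < ((diagEntry B i1 - betaMax B i1) - ρ i1) * x i1 ^ m :=
      mul_pos (by linarith) (hme.pow_pos hi1)
    have hpos : 0 < ∑ i : Fin n, ((diagEntry B i - betaMax B i) - ρ i) * x i ^ m :=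
      Finset.sum_pos' (fun i _ => hterm_nonneg i) ⟨i1, Finset.mem_univ _, hterm⟩
    linarith
  · have hΔ1 : DeltaSum B i1 = diagEntry B i1 - betaMax B i1 := by
      have := hρΔ i1
      have := h2 i1
      linarith
    by_cases hxs : ∀ j, j ≠ i1 → x j = 0
    · have hsingle : tensorApply B x = diagEntry B i1 * x i1 ^ m := by
        unfold tensorApply
        rw [Finset.sum_eq_single (fun _ => i1)]
        · rw [Finset.prod_const, Finset.card_univ, Fintype.card_fin]
          rfl
        · intro α _ hα
          have hex : ∃ t, α t ≠ i1 := by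
            by_contra h
            push_neg at h
            exact hα (funext h)
          obtain ⟨t, ht⟩ := hex
          rw [Finset.prod_eq_zero (Finset.mem_univ t) (hxs _ ht), mul_zero]
        · intro h
          exact absurd (Finset.mem_univ _) h
      rw [hsingle]
      exact mul_pos (lt_of_le_of_lt (betaMax_nonneg B i1) (h1 i1)) (hme.pow_pos hi1)
    · push_neg at hxs
      obtain ⟨j, hj, hxj⟩ := hxs
      by_cases hc2 : ρ j < diagEntry B j - betaMax B j
      · have hterm : 0 < ((diagEntry B j - betaMax B j) - ρ j) * x j ^ m :=
          mul_pos (by linarith) (hme.pow_pos hxj)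
        have hpos : 0 < ∑ i : Fin n, ((diagEntry B i - betaMax B i) - ρ i) * x i ^ m :=
          Finset.sum_pos' (fun i _ => hterm_nonneg i) ⟨j, Finset.mem_univ _, hterm⟩
        linarith
      · have hΔj : DeltaSum B j = diagEntry B j - betaMax B j := by
          have := hρΔ j
          have := h2 j
          linarith
        have hlt := h3 i1 j (Ne.symm hj)
        rw [hΔ1, hΔj] at hlt
        exact absurd hlt (lt_irrefl _)
end

section
/- Let B = (b_{i1...im}) be a symmetric double B-tensor of even order m and dimension n ≥ 2. Then B is a P-tensor. -/
open Finset

section Aux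
variable {m n : ℕ}

lemma betaMax_nonneg (B : (Fin m → Fin n) → ℝ) (i : Fin n) : 0 ≤ betaMax B i :=
  (Finset.le_fold_max _).2 (Or.inl le_rfl)

lemma le_betaMax {B : (Fin m → Fin n) → ℝ} {i : Fin n} {α : Fin m → Fin n}
    (h : α ∈ offRowSet m n i) : B α ≤ betaMax B i :=
  (Finset.le_fold_max _).2 (Or.inr ⟨α, h, le_rfl⟩)

variable [NeZero m]

lemma offRowSet_eq (i : Fin n) :
    offRowSet m n i
      = Finset.univ.filter (fun α : Fin m → Fin n => (¬ ∃ j, α = fun _ => j) ∧ α 0 = i) := by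
  ext α
  simp only [offRowSet, mem_filter, mem_univ, true_and]
  constructor
  · rintro ⟨h1, h2⟩
    have h0 : α 0 = i := h1 0 (by simp)
    refine ⟨?_, h0⟩
    rintro ⟨j, rfl⟩
    exact h2 (by rw [show j = i from h0])
  · rintro ⟨h1, h2⟩
    refine ⟨fun t ht => ?_, fun h => h1 ⟨i, h⟩⟩
    rwa [show t = 0 from Fin.ext (by simpa using ht)]

lemma rowSet_eq (i : Fin n) :
    rowSet m n i = Finset.univ.filter (fun α : Fin m → Fin n => α 0 = i) := by
  ext α
  simp only [rowSet, mem_filter, mem_univ, true_and]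
  constructor
  · intro h1
    exact h1 0 (by simp)
  · intro h1 t ht
    rwa [show t = 0 from Fin.ext (by simpa using ht)]

lemma apply_le_betaMax_sym {B : (Fin m → Fin n) → ℝ} (hsym : IsSymmetricTensor B)
    {α : Fin m → Fin n} (hα : ¬ ∃ j, α = fun _ => j) (t : Fin m) :
    B α ≤ betaMax B (α t) := by
  have h1 : B (α ∘ Equiv.swap 0 t) = B α := hsym _ _
  have hmem : α ∘ Equiv.swap 0 t ∈ offRowSet m n (α t) := by
    rw [offRowSet_eq]
    refine Finset.mem_filter.2 ⟨Finset.mem_univ _, ?_, ?_⟩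
    · rintro ⟨j, hj⟩
      apply hα
      refine ⟨j, funext fun u => ?_⟩
      have := congrFun hj (Equiv.swap 0 t u)
      simpa [Function.comp, Equiv.swap_apply_self] using this
    · show α (Equiv.swap 0 t 0) = α t
      rw [Equiv.swap_apply_left]
  rw [← h1]
  exact le_betaMax hmem

lemma inf'_add_const {ι : Type*} (s : Finset ι) (hs : s.Nonempty) (f : ι → ℝ) (c : ℝ) :
    (s.inf' hs fun t => f t + c) = s.inf' hs f + c := by
  apply le_antisymm
  · obtain ⟨i, hi, hieq⟩ := s.exists_mem_eq_inf' hs f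
    calc (s.inf' hs fun t => f t + c) ≤ f i + c := Finset.inf'_le _ hi
      _ = _ := by rw [hieq]
  · exact Finset.le_inf' _ _ fun b hb => add_le_add_left (Finset.inf'_le _ hb) c

lemma inf'_comp_equiv {ι : Type*} [Fintype ι] [Nonempty ι] (f : ι → ℝ) (σ : Equiv.Perm ι) :
    (Finset.univ.inf' Finset.univ_nonempty fun t => f (σ t))
      = Finset.univ.inf' Finset.univ_nonempty f := by
  apply le_antisymm
  · obtain ⟨i, _, hieq⟩ := Finset.univ.exists_mem_eq_inf' Finset.univ_nonempty f
    rw [hieq]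
    calc (Finset.univ.inf' Finset.univ_nonempty fun t => f (σ t)) ≤ f (σ (σ⁻¹ i)) :=
          Finset.inf'_le _ (Finset.mem_univ _)
      _ = f i := by simp
  · exact Finset.le_inf' _ _ fun b _ => Finset.inf'_le _ (Finset.mem_univ _)

end Aux

section Aux2
variable {m n : ℕ} [NeZero m]

lemma lemA (hme : Even m) (x : Fin n → ℝ) (s : Finset (Fin n)) :
    ∀ (β : Fin n → ℝ), (∀ i, 0 ≤ β i) →
    0 ≤ ∑ α ∈ Fintype.piFinset (fun _ : Fin m => s),
        (Finset.univ.inf' Finset.univ_nonempty fun t => β (α t)) * ∏ t, x (α t) := by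
  induction s using Finset.strongInduction with
  | _ s ih =>
    intro β hβ
    rcases s.eq_empty_or_nonempty with rfl | hs
    · rw [Fintype.piFinset_empty]
      simp
    obtain ⟨i₀, hi₀, hmin⟩ := s.exists_min_image β hs
    set c := β i₀ with hc
    set β' : Fin n → ℝ := fun i => if i ∈ s then β i - c else 0 with hβ'def
    have hβ' : ∀ i, 0 ≤ β' i := by
      intro i
      simp only [hβ'def]
      split
      · next h => linarith [hmin i h]
      · exact le_rfl
    have key : ∀ α ∈ Fintype.piFinset (fun _ : Fin m => s),
        (Finset.univ.inf' Finset.univ_nonempty fun t => β (α t))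
          = (Finset.univ.inf' Finset.univ_nonempty fun t => β' (α t)) + c := by
      intro α hα
      rw [Fintype.mem_piFinset] at hα
      rw [← inf'_add_const]
      congr 1
      funext t
      simp only [hβ'def, if_pos (hα t)]
      ring
    have hsplit : ∑ α ∈ Fintype.piFinset (fun _ : Fin m => s),
        (Finset.univ.inf' Finset.univ_nonempty fun t => β (α t)) * ∏ t, x (α t)
        = (∑ α ∈ Fintype.piFinset (fun _ : Fin m => s),
            (Finset.univ.inf' Finset.univ_nonempty fun t => β' (α t)) * ∏ t, x (α t))
          + c * ∑ α ∈ Fintype.piFinset (fun _ : Fin m => s), ∏ t, x (α t) := by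
      rw [Finset.mul_sum, ← Finset.sum_add_distrib]
      refine Finset.sum_congr rfl fun α hα => ?_
      rw [key α hα]
      ring
    rw [hsplit]
    have h2 : 0 ≤ c * ∑ α ∈ Fintype.piFinset (fun _ : Fin m => s), ∏ t, x (α t) := by
      have hps : ∑ α ∈ Fintype.piFinset (fun _ : Fin m => s), ∏ t, x (α t)
          = (∑ i ∈ s, x i) ^ m := by
        rw [← Finset.prod_univ_sum]
        simp [Finset.prod_const]
      rw [hps]
      exact mul_nonneg (hβ i₀) (hme.pow_nonneg _)
    have h1 : 0 ≤ ∑ α ∈ Fintype.piFinset (fun _ : Fin m => s),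
        (Finset.univ.inf' Finset.univ_nonempty fun t => β' (α t)) * ∏ t, x (α t) := by
      have hsub : Fintype.piFinset (fun _ : Fin m => s.erase i₀)
          ⊆ Fintype.piFinset (fun _ : Fin m => s) := by
        intro α hα
        rw [Fintype.mem_piFinset] at *
        exact fun t => Finset.mem_of_mem_erase (hα t)
      have hzero : ∀ α ∈ Fintype.piFinset (fun _ : Fin m => s),
          α ∉ Fintype.piFinset (fun _ : Fin m => s.erase i₀) →
          (Finset.univ.inf' Finset.univ_nonempty fun t => β' (α t)) * ∏ t, x (α t) = 0 := by
        intro α hα hα'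
        rw [Fintype.mem_piFinset] at hα
        have : ∃ t, α t = i₀ := by
          by_contra hcon
          push_neg at hcon
          exact hα' (Fintype.mem_piFinset.2 fun t => Finset.mem_erase.2 ⟨hcon t, hα t⟩)
        obtain ⟨t, ht⟩ := this
        have hinf : (Finset.univ.inf' Finset.univ_nonempty fun t => β' (α t)) = 0 := by
          apply le_antisymm
          · calc (Finset.univ.inf' Finset.univ_nonempty fun t => β' (α t)) ≤ β' (α t) :=
                Finset.inf'_le _ (Finset.mem_univ t)
              _ = 0 := by rw [ht]; simp [hβ'def, hi₀, hc]
          · exact Finset.le_inf' _ _ fun b _ => hβ' _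
        rw [hinf, zero_mul]
      rw [← Finset.sum_subset hsub hzero]
      exact ih (s.erase i₀) (Finset.erase_ssubset hi₀) β' hβ'
    linarith

lemma amgm (hm : 0 < m) (hme : Even m) (y : Fin m → ℝ) :
    |∏ t, y t| ≤ (m : ℝ)⁻¹ * ∑ t, y t ^ m := by
  have h1 : |∏ t, y t| = ∏ t, |y t| := Finset.abs_prod _ _
  have hrw : ∀ t : Fin m, |y t| = ((|y t| ^ m : ℝ)) ^ ((m : ℝ)⁻¹) := by
    intro t
    rw [← Real.rpow_natCast |y t| m, ← Real.rpow_mul (abs_nonneg _),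
      mul_inv_cancel₀ (Nat.cast_ne_zero.2 hm.ne'), Real.rpow_one]
  calc |∏ t, y t| = ∏ t, ((|y t| ^ m : ℝ)) ^ ((m : ℝ)⁻¹) := by
        rw [h1]; exact Finset.prod_congr rfl fun t _ => hrw t
    _ = ∏ t, ((|y t| ^ m : ℝ)) ^ (((fun _ : Fin m => (m : ℝ)⁻¹) t)) := rfl
    _ ≤ ∑ t, (m : ℝ)⁻¹ * (|y t| ^ m) := by
        apply Real.geom_mean_le_arith_mean_weighted
        · intro i _
          positivity
        · rw [Finset.sum_const, Finset.card_univ, Fintype.card_fin, nsmul_eq_mul,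
            mul_inv_cancel₀ (Nat.cast_ne_zero.2 hm.ne')]
        · intro i _
          positivity
    _ = (m : ℝ)⁻¹ * ∑ t, y t ^ m := by
        rw [Finset.mul_sum]
        exact Finset.sum_congr rfl fun t _ => by rw [hme.pow_abs]

lemma swap_sum (C : (Fin m → Fin n) → ℝ)
    (hC : ∀ (σ : Equiv.Perm (Fin m)) (α : Fin m → Fin n), C (α ∘ σ) = C α)
    (k : Fin n) (t : Fin m) :
    ∑ α ∈ Finset.univ.filter (fun α : Fin m → Fin n => (¬ ∃ j, α = fun _ => j) ∧ α t = k), C α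
    = ∑ α ∈ Finset.univ.filter (fun α : Fin m → Fin n => (¬ ∃ j, α = fun _ => j) ∧ α 0 = k),
        C α := by
  have hinv : ∀ α : Fin m → Fin n, (α ∘ Equiv.swap 0 t) ∘ Equiv.swap 0 t = α := by
    intro α
    funext u
    simp [Function.comp, Equiv.swap_apply_self]
  have hconst : ∀ (α : Fin m → Fin n), (∃ j, α ∘ Equiv.swap 0 t = fun _ => j) → ∃ j, α = fun _ => j := by
    rintro α ⟨j, hj⟩
    refine ⟨j, funext fun u => ?_⟩
    have := congrFun hj (Equiv.swap 0 t u)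
    simpa [Function.comp, Equiv.swap_apply_self] using this
  apply Finset.sum_nbij' (i := fun α => α ∘ Equiv.swap 0 t) (j := fun α => α ∘ Equiv.swap 0 t)
  · intro α hα
    rw [Finset.mem_filter] at *
    obtain ⟨-, hα1, hα2⟩ := hα
    refine ⟨Finset.mem_univ _, fun h => hα1 (hconst α h), ?_⟩
    show α (Equiv.swap 0 t 0) = k
    rwa [Equiv.swap_apply_left]
  · intro α hα
    rw [Finset.mem_filter] at *
    obtain ⟨-, hα1, hα2⟩ := hα
    refine ⟨Finset.mem_univ _, fun h => hα1 (hconst α h), ?_⟩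
    show α (Equiv.swap 0 t t) = k
    rwa [Equiv.swap_apply_right]
  · intro α _
    exact hinv α
  · intro α _
    exact hinv α
  · intro α _
    exact (hC _ _).symm

lemma diag_sum (F : (Fin m → Fin n) → ℝ) :
    ∑ α ∈ Finset.univ.filter (fun α : Fin m → Fin n => ∃ j, α = fun _ => j), F α
      = ∑ i : Fin n, F (fun _ => i) := by
  apply Finset.sum_nbij' (i := fun α => α 0) (j := fun (i : Fin n) => fun _ => i)
  · intro α _
    exact Finset.mem_univ _
  · intro i _
    exact Finset.mem_filter.2 ⟨Finset.mem_univ _, i, rfl⟩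
  · intro α hα
    obtain ⟨-, j, rfl⟩ := Finset.mem_filter.1 hα
    rfl
  · intro i _
    rfl
  · intro α hα
    obtain ⟨-, j, rfl⟩ := Finset.mem_filter.1 hα
    rfl

end Aux2

section Aux3
variable {m n : ℕ} [NeZero m]

lemma tensorApply_eq_sum_row (B : (Fin m → Fin n) → ℝ) (x : Fin n → ℝ) :
    tensorApply B x = ∑ i, x i * rowApply B x i := by
  rw [tensorApply,
    ← Finset.sum_fiberwise Finset.univ (fun α : Fin m → Fin n => α 0)
      (fun α => B α * ∏ t, x (α t))]
  refine Finset.sum_congr rfl fun i _ => ?_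
  rw [rowApply, rowSet_eq, Finset.mul_sum]
  refine Finset.sum_congr rfl fun α hα => ?_
  have hα0 : α 0 = i := (Finset.mem_filter.1 hα).2
  have hprod : (∏ t ∈ Finset.univ.filter (fun t : Fin m => (t : ℕ) = 0), x (α t)) *
      ∏ t ∈ Finset.univ.filter (fun t : Fin m => ¬ (t : ℕ) = 0), x (α t) = ∏ t, x (α t) :=
    Finset.prod_filter_mul_prod_filter_not Finset.univ _ _
  have hf : Finset.univ.filter (fun t : Fin m => (t : ℕ) = 0) = {0} := by
    ext u
    rw [Finset.mem_filter, Finset.mem_singleton]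
    constructor
    · rintro ⟨-, h⟩
      exact Fin.ext (by simpa using h)
    · rintro rfl
      exact ⟨Finset.mem_univ _, by simp⟩
  rw [← hprod, hf, Finset.prod_singleton, hα0]
  have : Finset.univ.filter (fun t : Fin m => (t : ℕ) ≠ 0)
      = Finset.univ.filter (fun t : Fin m => ¬ (t : ℕ) = 0) := rfl
  rw [this]
  ring

end Aux3

/-- an even order symmetric double B-tensor is a P-tensor. -/
theorem stmt15 (m n : ℕ) (hm : 0 < m) (hme : Even m) (hn : 2 ≤ n)
    (B : (Fin m → Fin n) → ℝ) (hsym : IsSymmetricTensor B)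
    (hB : IsDoubleBTensor B) : IsPTensor B := by
  haveI : NeZero m := ⟨hm.ne'⟩
  intro x hx
  have key : 0 < tensorApply B x := by
    by_cases hsupp : ∃ k l : Fin n, k ≠ l ∧ x k ≠ 0 ∧ x l ≠ 0
    case neg =>
      have hxk : ∃ k, x k ≠ 0 := by
        by_contra h
        push_neg at h
        exact hx (funext fun i => h i)
      obtain ⟨k, hk⟩ := hxk
      push_neg at hsupp
      have hzero : ∀ j, j ≠ k → x j = 0 := by
        intro j hj
        by_contra hj0
        exact hk (hsupp j k hj hj0)
      have heq : tensorApply B x = B (fun _ => k) * x k ^ m := by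
        rw [tensorApply]
        rw [Finset.sum_eq_single_of_mem (fun _ => k) (Finset.mem_univ _) ?_]
        · simp [Finset.prod_const, Finset.card_univ]
        · intro α _ hne
          have : ∃ t, α t ≠ k := by
            by_contra hc
            push_neg at hc
            exact hne (funext hc)
          obtain ⟨t, ht⟩ := this
          rw [Finset.prod_eq_zero (Finset.mem_univ t) (hzero _ ht), mul_zero]
      rw [heq]
      have hdiag : 0 < B (fun _ => k) := lt_of_le_of_lt (betaMax_nonneg B k) (hB.1 k)
      exact mul_pos hdiag (hme.pow_pos hk)
    case pos =>
      obtain ⟨k, l, hkl, hxk, hxl⟩ := hsupp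
      set β : Fin n → ℝ := fun i => betaMax B i with hβdef
      set mb : (Fin m → Fin n) → ℝ :=
        (fun α => Finset.univ.inf' Finset.univ_nonempty fun t => β (α t)) with hmbdef
      set M : (Fin m → Fin n) → ℝ := (fun α => B α - mb α) with hMdef
      set d : Fin n → ℝ := (fun i => diagEntry B i - β i) with hddef
      set r : Fin n → ℝ := (fun i => rowAbsSum M i) with hrdef
      have hβr : ∀ i, β i = betaMax B i := fun _ => rfl
      have hdi : ∀ i, d i = diagEntry B i - betaMax B i := fun _ => rfl
      have hMsym : ∀ (σ : Equiv.Perm (Fin m)) (α : Fin m → Fin n), M (α ∘ σ) = M α := by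
        intro σ α
        simp only [hMdef, hmbdef]
        rw [hsym σ α]
        congr 1
        exact inf'_comp_equiv (fun t => β (α t)) σ
      have hMabs : ∀ (σ : Equiv.Perm (Fin m)) (α : Fin m → Fin n), |M (α ∘ σ)| = |M α| :=
        fun σ α => by rw [hMsym σ α]
      have hMoff : ∀ α : Fin m → Fin n, (¬ ∃ j, α = fun _ => j) → M α ≤ 0 := by
        intro α hα
        simp only [hMdef]
        rw [sub_nonpos]
        exact Finset.le_inf' _ _ fun t _ => apply_le_betaMax_sym hsym hα t
      have hroff : ∀ i, r i ≤ DeltaSum B i := by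
        intro i
        have hriddef : r i = ∑ α ∈ offRowSet m n i, |M α| := rfl
        rw [hriddef, DeltaSum]
        refine Finset.sum_le_sum fun α hα => ?_
        have hα' := hα
        rw [offRowSet_eq] at hα'
        obtain ⟨-, hnd, h0⟩ := Finset.mem_filter.1 hα'
        have h1 : M α ≤ 0 := hMoff α hnd
        have h2 : mb α ≤ betaMax B i := by
          have h3 : mb α ≤ β (α 0) := Finset.inf'_le _ (Finset.mem_univ 0)
          rw [h0, hβr] at h3
          exact h3
        have h3 : M α = B α - mb α := rfl
        rw [abs_of_nonpos h1, h3]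
        linarith
      have hd : ∀ i, 0 < d i := by
        intro i
        rw [hdi]
        exact sub_pos.2 (hB.1 i)
      have hdr : ∀ i, 0 ≤ d i - r i := by
        intro i
        have h1 := hroff i
        have h2 := hB.2.1 i
        rw [hdi]
        linarith
      have c1 : tensorApply B x
          = (∑ α : Fin m → Fin n, M α * ∏ t, x (α t))
            + ∑ α : Fin m → Fin n, mb α * ∏ t, x (α t) := by
        rw [tensorApply, ← Finset.sum_add_distrib]
        refine Finset.sum_congr rfl fun α _ => ?_
        have h3 : M α = B α - mb α := rfl
        rw [h3]
        ring
      have c2 : 0 ≤ ∑ α : Fin m → Fin n, mb α * ∏ t, x (α t) := by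
        have h := lemA (m := m) (n := n) hme x Finset.univ β (fun i => betaMax_nonneg B i)
        rwa [Fintype.piFinset_univ] at h
      have c3 : (∑ α : Fin m → Fin n, M α * ∏ t, x (α t))
          = (∑ i, d i * x i ^ m)
            + ∑ α ∈ Finset.univ.filter (fun α : Fin m → Fin n => ¬ ∃ j, α = fun _ => j),
                M α * ∏ t, x (α t) := by
        rw [← Finset.sum_filter_add_sum_filter_not Finset.univ
            (fun α : Fin m → Fin n => ∃ j, α = fun _ => j) (fun α => M α * ∏ t, x (α t))]
        congr 1
        rw [diag_sum (fun α => M α * ∏ t, x (α t))]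
        refine Finset.sum_congr rfl fun i _ => ?_
        have h1 : M (fun _ => i) = d i := by
          simp only [hMdef, hmbdef, hddef, diagEntry]
          rw [Finset.inf'_const]
        rw [h1]
        congr 1
        simp [Finset.prod_const, Finset.card_univ]
      have c5 : -(∑ i, r i * x i ^ m)
          ≤ ∑ α ∈ Finset.univ.filter (fun α : Fin m → Fin n => ¬ ∃ j, α = fun _ => j),
              M α * ∏ t, x (α t) := by
        set offD := Finset.univ.filter (fun α : Fin m → Fin n => ¬ ∃ j, α = fun _ => j)
          with hoffD
        have step1 : ∑ α ∈ offD, -(|M α| * ((m : ℝ)⁻¹ * ∑ t, x (α t) ^ m))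
            ≤ ∑ α ∈ offD, M α * ∏ t, x (α t) := by
          refine Finset.sum_le_sum fun α _ => ?_
          have h1 : |M α * ∏ t, x (α t)| ≤ |M α| * ((m : ℝ)⁻¹ * ∑ t, x (α t) ^ m) := by
            rw [abs_mul]
            exact mul_le_mul_of_nonneg_left (amgm hm hme fun t => x (α t)) (abs_nonneg _)
          exact le_trans (neg_le_neg h1) (neg_abs_le _)
        have step3 : ∀ t : Fin m, ∑ α ∈ offD, |M α| * x (α t) ^ m = ∑ i, r i * x i ^ m := by
          intro t
          rw [← Finset.sum_fiberwise offD (fun α => α t) (fun α => |M α| * x (α t) ^ m)]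
          refine Finset.sum_congr rfl fun i _ => ?_
          have e1 : ∑ α ∈ offD.filter (fun α => α t = i), |M α| * x (α t) ^ m
              = (∑ α ∈ offD.filter (fun α => α t = i), |M α|) * x i ^ m := by
            rw [Finset.sum_mul]
            exact Finset.sum_congr rfl fun α hα => by rw [(Finset.mem_filter.1 hα).2]
          rw [e1]
          congr 1
          have e2 : offD.filter (fun α => α t = i)
              = Finset.univ.filter
                  (fun α : Fin m → Fin n => (¬ ∃ j, α = fun _ => j) ∧ α t = i) := by
            rw [hoffD, Finset.filter_filter]
          have e3 : r i = ∑ α ∈ Finset.univ.filter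
              (fun α : Fin m → Fin n => (¬ ∃ j, α = fun _ => j) ∧ α 0 = i), |M α| := by
            have hriddef : r i = ∑ α ∈ offRowSet m n i, |M α| := rfl
            rw [hriddef, offRowSet_eq]
          rw [e2, swap_sum (fun α => |M α|) hMabs i t, e3]
        have step2 : ∑ α ∈ offD, |M α| * ((m : ℝ)⁻¹ * ∑ t, x (α t) ^ m)
            = ∑ i, r i * x i ^ m := by
          have e1 : ∀ α : Fin m → Fin n, |M α| * ((m : ℝ)⁻¹ * ∑ t, x (α t) ^ m)
              = (m : ℝ)⁻¹ * ∑ t, |M α| * x (α t) ^ m := by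
            intro α
            rw [← mul_assoc, mul_comm (|M α|) ((m : ℝ)⁻¹), mul_assoc, Finset.mul_sum]
          calc ∑ α ∈ offD, |M α| * ((m : ℝ)⁻¹ * ∑ t, x (α t) ^ m)
              = (m : ℝ)⁻¹ * ∑ α ∈ offD, ∑ t, |M α| * x (α t) ^ m := by
                rw [Finset.mul_sum]
                exact Finset.sum_congr rfl fun α _ => e1 α
            _ = (m : ℝ)⁻¹ * ∑ t : Fin m, ∑ α ∈ offD, |M α| * x (α t) ^ m := by
                rw [Finset.sum_comm]
            _ = (m : ℝ)⁻¹ * ∑ _t : Fin m, ∑ i, r i * x i ^ m := by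
                rw [Finset.sum_congr rfl fun t _ => step3 t]
            _ = (m : ℝ)⁻¹ * ((m : ℕ) * ∑ i, r i * x i ^ m) := by
                rw [Finset.sum_const, Finset.card_univ, Fintype.card_fin, nsmul_eq_mul]
            _ = ∑ i, r i * x i ^ m := by
                rw [← mul_assoc, inv_mul_cancel₀ (Nat.cast_ne_zero.2 hm.ne'), one_mul]
        calc -(∑ i, r i * x i ^ m)
            = ∑ α ∈ offD, -(|M α| * ((m : ℝ)⁻¹ * ∑ t, x (α t) ^ m)) := by
              rw [← step2, Finset.sum_neg_distrib]
          _ ≤ _ := step1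
      have c6 : (∑ i, (d i - r i) * x i ^ m) ≤ tensorApply B x := by
        have h1 : ∑ i, (d i - r i) * x i ^ m
            = (∑ i, d i * x i ^ m) - ∑ i, r i * x i ^ m := by
          rw [← Finset.sum_sub_distrib]
          exact Finset.sum_congr rfl fun i _ => by ring
        rw [c1, c3, h1]
        linarith [c2, c5]
      have c7 : (d k - r k) * x k ^ m + (d l - r l) * x l ^ m
          ≤ ∑ i, (d i - r i) * x i ^ m := by
        have hsp : ∑ i ∈ ({k, l} : Finset (Fin n)), (d i - r i) * x i ^ m
            = (d k - r k) * x k ^ m + (d l - r l) * x l ^ m :=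
          Finset.sum_pair hkl
        rw [← hsp]
        apply Finset.sum_le_sum_of_subset_of_nonneg (Finset.subset_univ _)
        intro i _ _
        exact mul_nonneg (hdr i) (hme.pow_nonneg _)
      have hone : 0 < (d k - r k) + (d l - r l) := by
        by_contra hcon
        push_neg at hcon
        have h1 : d k - r k = 0 := le_antisymm (by linarith [hdr l]) (hdr k)
        have h2 : d l - r l = 0 := le_antisymm (by linarith [hdr k]) (hdr l)
        have hΔk : DeltaSum B k = d k := by
          have ha := hB.2.1 k
          have hb := hroff k
          rw [hdi] at h1 ⊢
          linarith
        have hΔl : DeltaSum B l = d l := by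
          have ha := hB.2.1 l
          have hb := hroff l
          rw [hdi] at h2 ⊢
          linarith
        have hlt := hB.2.2 k l hkl
        rw [hΔk, hΔl, ← hdi k, ← hdi l] at hlt
        exact lt_irrefl _ hlt
      have c8 : 0 < (d k - r k) * x k ^ m + (d l - r l) * x l ^ m := by
        have hpk : 0 < x k ^ m := hme.pow_pos hxk
        have hpl : 0 < x l ^ m := hme.pow_pos hxl
        rcases lt_or_ge 0 (d k - r k) with h | h
        · have h2 : 0 ≤ (d l - r l) * x l ^ m := mul_nonneg (hdr l) hpl.le
          nlinarith
        · have h2 : 0 < d l - r l := by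
            have := hdr k
            linarith
          have h3 : 0 ≤ (d k - r k) * x k ^ m := mul_nonneg (hdr k) hpk.le
          nlinarith
      linarith [c6, c7, c8]
  rw [tensorApply_eq_sum_row B x] at key
  by_contra hcon
  push_neg at hcon
  have : ∑ i, x i * rowApply B x i ≤ 0 := Finset.sum_nonpos fun i _ => hcon i
  linarith
end
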